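/- arXiv:2408.05473 — 4 statements merged into one kernel-verified Lean document; each statement's English description precedes it below -/
import Mathlib

section
/- Let L be a frame and a ∈ L with ⨆{x ∈ BL | x ≤ a} = a, where BL is the set of complemented elements. Then {x ∈ BL | x ≤ a*} equals the annihilator of {x ∈ BL | x ≤ a} within BL, i.e., an element c ∈ BL satisfies c ≤ a* if and only if c ⊓ y = ⊥ for all y ∈ BL with y ≤ a. -/
theorem r0_pseudocompl_eq_annihilator {L : Type*} [Order.Frame L]
    (a : L) (ha : sSup {x : L | x ⊔ xᶜ = ⊤ ∧ x ≤ a} = a)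
    (c : L) (hc : c ⊔ cᶜ = ⊤) :
    c ≤ aᶜ ↔ ∀ y : L, y ⊔ yᶜ = ⊤ → y ≤ a → c ⊓ y = ⊥ := by
  constructor
  · intro h y _ hya
    have : c ⊓ y ≤ aᶜ ⊓ a := inf_le_inf h hya
    simpa using le_bot_iff.mp (this.trans (by simp))
  · intro h
    rw [le_compl_iff_disjoint_right, disjoint_iff]
    conv_lhs => rw [← ha]
    rw [inf_sSup_eq]
    simp only [iSup_eq_bot]
    rintro y ⟨hy, hya⟩
    exact h y hy hya
end

section
/- Let L be a frame, BL its Boolean algebra of complemented elements, and let β₀L denote the frame of ideals of BL. If I, J ∈ β₀L with I well-inside J (i.e., there exists H ∈ β₀L with I ∩ H = {⊥} and the ideal generated by H ∪ J being all of BL), then there exists b ∈ J such that ⨆ I ≤ b in L. -/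
/-- `I` is an ideal of the sublattice `BL` of complemented elements of the frame `L`. -/
def IsIdealBL {L : Type*} [Order.Frame L] (I : Set L) : Prop :=
  I ⊆ {x : L | x ⊔ xᶜ = ⊤} ∧ ⊥ ∈ I ∧
    (∀ x, x ⊔ xᶜ = ⊤ → ∀ y ∈ I, x ≤ y → x ∈ I) ∧
    (∀ x ∈ I, ∀ y ∈ I, x ⊔ y ∈ I)

theorem wellInside_ideal_exists_bound {L : Type*} [Order.Frame L]
    (I J H : Set L) (hI : IsIdealBL I) (hJ : IsIdealBL J) (hH : IsIdealBL H)
    (hmeet : I ∩ H = {⊥})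
    (hjoin : ∀ x : L, x ⊔ xᶜ = ⊤ → ∃ h ∈ H, ∃ j ∈ J, x ≤ h ⊔ j) :
    ∃ b ∈ J, sSup I ≤ b := by
  obtain ⟨h, hhH, j, hjJ, htop⟩ := hjoin ⊤ (by simp)
  refine ⟨j, hjJ, sSup_le fun x hx => ?_⟩
  have hxc : x ⊔ xᶜ = ⊤ := hI.1 hx
  have hhc : h ⊔ hᶜ = ⊤ := hH.1 hhH
  have hicx : IsCompl x xᶜ := ⟨disjoint_compl_right, codisjoint_iff.2 hxc⟩
  have hich : IsCompl h hᶜ := ⟨disjoint_compl_right, codisjoint_iff.2 hhc⟩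
  have hicomp : IsCompl (x ⊓ h) (xᶜ ⊔ hᶜ) := hicx.inf_sup hich
  have hcomp : (x ⊓ h) ⊔ (x ⊓ h)ᶜ = ⊤ := by
    have h1 : xᶜ ⊔ hᶜ ≤ (x ⊓ h)ᶜ :=
      sup_le (compl_anti inf_le_left) (compl_anti inf_le_right)
    exact top_unique <| (codisjoint_iff.1 hicomp.codisjoint).ge.trans
      (sup_le_sup_left h1 _)
  have hxhI : x ⊓ h ∈ I := hI.2.2.1 _ hcomp x hx inf_le_left
  have hxhH : x ⊓ h ∈ H := hH.2.2.1 _ hcomp h hhH inf_le_right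
  have hbot : x ⊓ h = ⊥ := by
    have : x ⊓ h ∈ I ∩ H := ⟨hxhI, hxhH⟩
    rwa [hmeet] at this
  calc x = x ⊓ (h ⊔ j) := by rw [inf_eq_left.2 (le_top.trans htop)]
    _ = (x ⊓ h) ⊔ (x ⊓ j) := inf_sup_left x h j
    _ = x ⊓ j := by rw [hbot, bot_sup_eq]
    _ ≤ j := inf_le_right
end

section
/- Let R be a commutative reduced ring and S ⊆ R a subring. If every z-ideal of S is the contraction (intersection with S) of a z-ideal of R, then every prime z-ideal of S is the contraction of a prime z-ideal of R. (Here one uses that an ideal minimal over a z-ideal is a z-ideal.) -/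
/-- An ideal `A` of a commutative ring is a z-ideal if whenever two elements lie in
exactly the same maximal ideals and one of them is in `A`, so is the other. -/
def IsZIdeal {R : Type*} [CommRing R] (A : Ideal R) : Prop :=
  ∀ a b : R, (∀ M : Ideal R, M.IsMaximal → (a ∈ M ↔ b ∈ M)) → a ∈ A → b ∈ A

theorem prime_zIdeal_contraction {R : Type*} [CommRing R] [IsReduced R]
    (S : Subring R)
    (hcontr : ∀ Q : Ideal S, IsZIdeal Q → ∃ H : Ideal R, IsZIdeal H ∧
      Q = H.comap S.subtype)
    (mason : ∀ H P : Ideal R, IsZIdeal H → P.IsPrime → H ≤ P →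
      (∀ P' : Ideal R, P'.IsPrime → H ≤ P' → P' ≤ P → P' = P) → IsZIdeal P)
    (P : Ideal S) (hP : IsZIdeal P) (hPprime : P.IsPrime) :
    ∃ Q : Ideal R, IsZIdeal Q ∧ Q.IsPrime ∧ P = Q.comap S.subtype := by
  obtain ⟨H, hHz, hHc⟩ := hcontr P hP
  -- the multiplicative set: image of S \ P in R
  let T : Submonoid R := Submonoid.map (S.subtype : S →+* R).toMonoidHom P.primeCompl
  have hdisj : Disjoint (H : Set R) (T : Set R) := by
    rw [Set.disjoint_left]
    rintro x hx ⟨s, hs, rfl⟩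
    exact hs (by rw [hHc]; exact hx)
  obtain ⟨p, hp, hHp, hpdisj⟩ := Ideal.exists_le_prime_disjoint H T hdisj
  obtain ⟨Q, hQmin, hQp⟩ := Ideal.exists_minimalPrimes_le hHp
  obtain ⟨⟨hQprime, hHQ⟩, hQmin'⟩ := hQmin
  have hQz : IsZIdeal Q := by
    refine mason H Q hHz hQprime hHQ ?_
    intro P' hP' hHP' hP'Q
    exact le_antisymm hP'Q (hQmin' ⟨hP', hHP'⟩ hP'Q)
  refine ⟨Q, hQz, hQprime, le_antisymm ?_ ?_⟩
  · intro x hx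
    have : (x : R) ∈ H := by rw [hHc] at hx; exact hx
    exact hHQ this
  · intro x hx
    by_contra hxP
    have : (x : R) ∈ T := ⟨x, hxP, rfl⟩
    exact Set.disjoint_left.mp hpdisj (hQp hx) this
end

section
/- Let L be a compact frame and BL its Boolean algebra of complemented elements. Let I be a prime element of the frame β₀L of ideals of BL (i.e., a prime ideal of BL). If the join ⨆ I in L is strictly below ⊤ and L is zero-dimensional (every a ∈ L is the join of complemented elements below it), then ⨆ I is a prime element of L: whenever a ⊓ b = ⨆ I, then a = ⨆ I or b = ⨆ I. -/
lemma sup_compl_top_of_sup {L : Type*} [Order.Frame L] {z w : L}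
    (hz : z ⊔ zᶜ = ⊤) (hw : w ⊔ wᶜ = ⊤) : (z ⊔ w) ⊔ (z ⊔ w)ᶜ = ⊤ := by
  rw [compl_sup, sup_inf_left, ← top_le_iff]
  refine le_inf ?_ ?_
  · exact hz.ge.trans (sup_le_sup_right le_sup_left _)
  · exact hw.ge.trans (sup_le_sup_right le_sup_right _)

theorem sSup_maximal_ideal_prime {L : Type*} [Order.Frame L]
    (hcompact : ∀ S : Set L, sSup S = ⊤ → ∃ F ⊆ S, F.Finite ∧ sSup F = ⊤)
    (hzd : ∀ a : L, a = sSup {x : L | x ⊔ xᶜ = ⊤ ∧ x ≤ a})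
    (I : Set L) (hI : IsIdealBL I)
    (hImax : ∀ J : Set L, IsIdealBL J → I ⊆ J → J = I ∨ J = {x : L | x ⊔ xᶜ = ⊤})
    (hlt : sSup I < ⊤) :
    ∀ a b : L, a ⊓ b = sSup I → a = sSup I ∨ b = sSup I := by
  obtain ⟨hIsub, hIbot, hIdown, hIjoin⟩ := hI
  intro a b hab
  by_contra hcon
  push_neg at hcon
  obtain ⟨ha, hb⟩ := hcon
  have hsa : sSup I ≤ a := hab ▸ inf_le_left
  have hsb : sSup I ≤ b := hab ▸ inf_le_right
  have key : ∀ c : L, sSup I ≤ c → c ≠ sSup I →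
      ∃ x : L, x ⊔ xᶜ = ⊤ ∧ x ≤ c ∧ xᶜ ≤ sSup I := by
    intro c hsc hc
    have hx : ∃ x : L, (x ⊔ xᶜ = ⊤ ∧ x ≤ c) ∧ ¬ x ≤ sSup I := by
      by_contra h
      push_neg at h
      have hcle : c ≤ sSup I := by
        conv_lhs => rw [hzd c]
        exact sSup_le fun x hx => h x hx
      exact hc (le_antisymm hcle hsc)
    obtain ⟨x, ⟨hxc, hxle⟩, hxns⟩ := hx
    have hxnI : x ∉ I := fun hxI => hxns (le_sSup hxI)
    set J : Set L := {z : L | z ⊔ zᶜ = ⊤ ∧ ∃ i ∈ I, z ≤ i ⊔ x} with hJdef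
    have hJideal : IsIdealBL J := by
      refine ⟨fun z hz => hz.1, ⟨by simp, ⊥, hIbot, bot_le⟩, ?_, ?_⟩
      · rintro z hzc w ⟨hwc, i, hiI, hwle⟩ hzw
        exact ⟨hzc, i, hiI, hzw.trans hwle⟩
      · rintro z ⟨hzc, i, hiI, hzle⟩ w ⟨hwc, j, hjI, hwle⟩
        refine ⟨sup_compl_top_of_sup hzc hwc, i ⊔ j, hIjoin _ hiI _ hjI, sup_le ?_ ?_⟩
        · exact hzle.trans (sup_le_sup_right le_sup_left _)
        · exact hwle.trans (sup_le_sup_right le_sup_right _)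
    have hIJ : I ⊆ J := fun i hiI => ⟨hIsub hiI, i, hiI, le_sup_left⟩
    have hxJ : x ∈ J := ⟨hxc, ⊥, hIbot, by simp⟩
    rcases hImax J hJideal hIJ with hJI | hJBL
    · exact absurd (hJI ▸ hxJ) hxnI
    · have htopJ : (⊤ : L) ∈ J := by
        rw [hJBL]; simp
      obtain ⟨-, i, hiI, htople⟩ := htopJ
      have hix : i ⊔ x = ⊤ := top_le_iff.mp htople
      have hcle : xᶜ ≤ i := by
        have : xᶜ = xᶜ ⊓ (i ⊔ x) := by rw [hix, inf_top_eq]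
        rw [this, inf_sup_left]
        exact sup_le inf_le_right (by simp)
      exact ⟨x, hxc, hxle, hcle.trans (le_sSup hiI)⟩
  obtain ⟨x, hxc, hxa, hxcs⟩ := key a hsa ha
  obtain ⟨y, hyc, hyb, hycs⟩ := key b hsb hb
  have htop : (⊤ : L) ≤ sSup I := by
    have h1 : (x ⊔ xᶜ) ⊓ (y ⊔ yᶜ) = ⊤ := by rw [hxc, hyc, top_inf_eq]
    rw [← h1, inf_sup_right]
    refine sup_le ?_ (inf_le_left.trans hxcs)
    rw [inf_sup_left]
    refine sup_le ?_ (inf_le_right.trans hycs)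
    exact (inf_le_inf hxa hyb).trans hab.le
  exact absurd (top_le_iff.mp htop) hlt.ne
end
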